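/- arXiv:1301.1015 — 5 statements merged into one kernel-verified Lean document; each statement's English description precedes it below -/
import Mathlib

section
/- Let R be a commutative noetherian ring, 𝔞 = (a₁,…,aₙ) a finitely generated ideal of R, M an R-module, and S a Serre subcategory of the category of R-modules. Then 𝔞M belongs to S if and only if M/(0 :_M 𝔞) belongs to S. -/
open CategoryTheory

/-- A Serre subcategory of the category of `R`-modules, given as an
isomorphism-invariant class of modules `P` such that, for every module `M` and every
submodule `N ⊆ M`, `M ∈ P` iff both `N ∈ P` and `M/N ∈ P` (i.e. `P` is closed under
submodules, quotients and extensions). -/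
structure SerreClass (R : Type) [CommRing R] where
  mem : (M : Type) → [AddCommGroup M] → [Module R M] → Prop
  mem_congr : ∀ (M N : Type) [AddCommGroup M] [Module R M] [AddCommGroup N] [Module R N],
    (M ≃ₗ[R] N) → mem M → mem N
  mem_iff : ∀ (M : Type) [AddCommGroup M] [Module R M] (N : Submodule R M),
    mem M ↔ (mem N ∧ mem (M ⧸ N))

section Aux

variable {R : Type} [CommRing R] (S : SerreClass R)

lemma SerreClass.mem_sub {M : Type} [AddCommGroup M] [Module R M] (N : Submodule R M)
    (h : S.mem M) : S.mem N := ((S.mem_iff M N).1 h).1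

lemma SerreClass.mem_quot {M : Type} [AddCommGroup M] [Module R M] (N : Submodule R M)
    (h : S.mem M) : S.mem (M ⧸ N) := ((S.mem_iff M N).1 h).2

lemma SerreClass.mem_subsingleton {M N : Type} [AddCommGroup M] [Module R M]
    [AddCommGroup N] [Module R N] [Subsingleton N] (h : S.mem M) : S.mem N :=
  S.mem_congr _ _ (LinearEquiv.ofSubsingleton (⊥ : Submodule R M) N)
    (S.mem_sub ⊥ h)

lemma SerreClass.mem_prod {M N : Type} [AddCommGroup M] [Module R M]
    [AddCommGroup N] [Module R N] (hM : S.mem M) (hN : S.mem N) : S.mem (M × N) := by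
  refine (S.mem_iff (M × N) (Submodule.fst R M N)).2 ⟨?_, ?_⟩
  · exact S.mem_congr M _ (Submodule.fstEquiv R M N).symm hM
  · refine S.mem_congr N _ ?_ hN
    exact ((Submodule.quotEquivOfEq (Submodule.fst R M N)
      (LinearMap.ker (LinearMap.snd R M N)) rfl).trans
      (LinearMap.quotKerEquivOfSurjective (LinearMap.snd R M N)
        (fun y => ⟨(0, y), rfl⟩))).symm

/-- `Fin (n+1) → M` is linearly equivalent to `M × (Fin n → M)`. -/
def piFinSuccLEquiv (n : ℕ) (M : Type) [AddCommGroup M] [Module R M] :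
    (Fin (n + 1) → M) ≃ₗ[R] M × (Fin n → M) :=
  { (Fin.consEquiv (fun _ : Fin (n + 1) => M)).symm with
    map_add' := fun _ _ => rfl
    map_smul' := fun _ _ => rfl }

lemma SerreClass.mem_pi {M : Type} [AddCommGroup M] [Module R M] (h : S.mem M)
    (n : ℕ) : S.mem (Fin n → M) := by
  induction n with
  | zero => exact S.mem_subsingleton h
  | succ n ih => exact S.mem_congr _ _ (piFinSuccLEquiv n M).symm (S.mem_prod h ih)

end Aux

/-- Over a commutative noetherian ring `R`, for a finitely generated ideal
`𝔞 = (a₁, …, aₙ)`, a module `M` and a Serre class `S`, one has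
`𝔞M ∈ S ↔ M / (0 :_M 𝔞) ∈ S`. -/
theorem serreClass_smul_mem_iff (R : Type) [CommRing R] [IsNoetherianRing R]
    (S : SerreClass R) (𝔞 : Ideal R) (n : ℕ) (a : Fin n → R)
    (ha : 𝔞 = Ideal.span (Set.range a))
    (M : Type) [AddCommGroup M] [Module R M] :
    S.mem ↥(𝔞 • ⊤ : Submodule R M) ↔
      S.mem (M ⧸ Submodule.torsionBySet R M (𝔞 : Set R)) := by
  have hai : ∀ i, a i ∈ 𝔞 := by
    intro i
    rw [ha]
    exact Ideal.subset_span ⟨i, rfl⟩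
  constructor
  · -- M/(0:𝔞) embeds into (𝔞M)^n
    intro h
    set f : M →ₗ[R] (Fin n → ↥(𝔞 • ⊤ : Submodule R M)) :=
      { toFun := fun m i => ⟨a i • m, Submodule.smul_mem_smul (hai i) trivial⟩
        map_add' := fun x y => funext fun i => Subtype.ext (smul_add (a i) x y)
        map_smul' := fun r x => funext fun i => Subtype.ext (smul_comm (a i) r x) }
    have hker : LinearMap.ker f = Submodule.torsionBySet R M (𝔞 : Set R) := by
      ext m
      simp only [LinearMap.mem_ker, Submodule.mem_torsionBySet_iff]
      constructor
      · intro hm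
        have key : ∀ r ∈ Ideal.span (Set.range a), r • m = 0 := by
          intro r hr
          induction hr using Submodule.span_induction with
          | mem x hx =>
            obtain ⟨i, rfl⟩ := hx
            have := congrFun hm i
            exact congrArg Subtype.val this
          | zero => simp
          | add x y _ _ hx hy => rw [add_smul, hx, hy, add_zero]
          | smul c x _ hx => rw [smul_eq_mul, mul_smul, hx, smul_zero]
        rintro ⟨r, hr⟩
        rw [ha] at hr
        exact key r hr
      · intro hm
        refine funext fun i => Subtype.ext ?_
        exact hm ⟨a i, hai i⟩
    have : S.mem (M ⧸ LinearMap.ker f) := by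
      refine S.mem_congr _ _ (f.quotKerEquivRange).symm ?_
      exact S.mem_sub _ (S.mem_pi h n)
    rw [hker] at this
    exact this
  · -- 𝔞M is a quotient of (M/(0:𝔞))^n
    intro h
    set T := Submodule.torsionBySet R M (𝔞 : Set R)
    have hlift : ∀ i : Fin n, T ≤ LinearMap.ker
        (LinearMap.codRestrict (𝔞 • ⊤ : Submodule R M)
          (a i • (LinearMap.id : M →ₗ[R] M))
          (fun m => Submodule.smul_mem_smul (hai i) trivial)) := by
      intro i m hm
      rw [LinearMap.mem_ker]
      apply Subtype.ext
      simpa using (Submodule.mem_torsionBySet_iff _ _).1 hm ⟨a i, hai i⟩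
    set g : (Fin n → M ⧸ T) →ₗ[R] ↥(𝔞 • ⊤ : Submodule R M) :=
      ∑ i : Fin n, (Submodule.liftQ T _ (hlift i)).comp (LinearMap.proj i)
    have hg : ∀ (i : Fin n) (m : M),
        g (Pi.single i (Submodule.Quotient.mk m)) = ⟨a i • m,
          Submodule.smul_mem_smul (hai i) trivial⟩ := by
      intro i m
      simp only [g, LinearMap.sum_apply, LinearMap.comp_apply, LinearMap.proj_apply]
      rw [Finset.sum_eq_single i]
      · simp [Pi.single_eq_same]
        rfl
      · intro j _ hj
        rw [Pi.single_eq_of_ne hj]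
        simp
      · simp
    have hsurj : Function.Surjective g := by
      rintro ⟨x, hx⟩
      have key : ∀ y ∈ (𝔞 • ⊤ : Submodule R M), ∃ u, ((g u : M) = y) := by
        intro y hy
        refine Submodule.smul_induction_on hy (fun r hr m _ => ?_)
          (fun y z ihy ihz => ?_)
        · rw [ha] at hr
          induction hr using Submodule.span_induction with
          | mem z hz =>
            obtain ⟨i, rfl⟩ := hz
            exact ⟨Pi.single i (Submodule.Quotient.mk m), congrArg Subtype.val (hg i m)⟩
          | zero => exact ⟨0, by simp⟩
          | add z w _ _ ihz ihw =>
            obtain ⟨u, hu⟩ := ihz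
            obtain ⟨v, hv⟩ := ihw
            exact ⟨u + v, by rw [map_add, Submodule.coe_add, hu, hv, add_smul]⟩
          | smul c z _ ihz =>
            obtain ⟨u, hu⟩ := ihz
            exact ⟨c • u, by rw [map_smul, Submodule.coe_smul, hu, smul_eq_mul, mul_smul]⟩
        · obtain ⟨u, hu⟩ := ihy
          obtain ⟨v, hv⟩ := ihz
          exact ⟨u + v, by rw [map_add, Submodule.coe_add, hu, hv]⟩
      obtain ⟨u, hu⟩ := key x hx
      exact ⟨u, Subtype.ext hu⟩
    refine S.mem_congr _ _ (LinearMap.quotKerEquivOfSurjective g hsurj) ?_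
    exact S.mem_quot _ (S.mem_pi h n)
end

section
/- Let R be a commutative noetherian ring, I, J, 𝔟 ideals of R with J^n ⊆ 𝔟^m for some positive integers n, m, and M a finitely generated R-module. Then depth(I,𝔟,M) ≤ depth(I,J,M). -/
open CategoryTheory

variable {R : Type} [CommRing R]

/-- The classical depth of an ideal `𝔞` on a module `M`: the supremum of lengths of
weakly regular `M`-sequences contained in `𝔞`, with the convention that it is `∞`
when `𝔞 M = M`. -/
noncomputable def idealDepth (𝔞 : Ideal R) (M : Type) [AddCommGroup M] [Module R M] : ℕ∞ :=
  open Classical in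
  if (𝔞 • ⊤ : Submodule R M) = ⊤ then ⊤
  else sSup {n : ℕ∞ | ∃ rs : List R, (∀ r ∈ rs, r ∈ 𝔞) ∧
    RingTheory.Sequence.IsWeaklyRegular M rs ∧ (rs.length : ℕ∞) = n}

/-- `W̃(I,J)`: the set of ideals `𝔞` with `Iⁿ ⊆ 𝔞 + J` for some `n ≥ 1`. -/
def tildeW (I J : Ideal R) : Set (Ideal R) :=
  {𝔞 | ∃ n : ℕ, 0 < n ∧ I ^ n ≤ 𝔞 ⊔ J}

/-- The depth of a pair of ideals `(I,J)` on `M`: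
`inf { depth(𝔞, M) : 𝔞 ∈ W̃(I,J) }`. -/
noncomputable def pairDepth (I J : Ideal R) (M : Type) [AddCommGroup M] [Module R M] : ℕ∞ :=
  ⨅ 𝔞 ∈ tildeW I J, idealDepth 𝔞 M

lemma sup_pow_le_aux (a b : Ideal R) (n : ℕ) (hn : 0 < n) : (a ⊔ b) ^ n ≤ a ⊔ b ^ n := by
  induction n with
  | zero => omega
  | succ k ih =>
    rcases Nat.eq_zero_or_pos k with hk | hk
    · subst hk; simp
    · calc (a ⊔ b) ^ (k+1) = (a ⊔ b) * (a ⊔ b) ^ k := by ring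
        _ ≤ (a ⊔ b) * (a ⊔ b ^ k) := Ideal.mul_mono_right (ih hk)
        _ ≤ a ⊔ b ^ (k+1) := by
            rw [Ideal.sup_mul, Ideal.mul_sup, Ideal.mul_sup]
            refine sup_le (sup_le ?_ ?_) (sup_le ?_ ?_)
            · exact le_sup_of_le_left Ideal.mul_le_right
            · exact le_sup_of_le_left Ideal.mul_le_left
            · exact le_sup_of_le_left Ideal.mul_le_right
            · rw [← pow_succ']; exact le_sup_right

/-- If `Jⁿ ⊆ 𝔟ᵐ` for some `n, m ≥ 1`, then `depth(I,𝔟,M) ≤ depth(I,J,M)`. -/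
theorem pairDepth_le_of_pow_le [IsNoetherianRing R] (I J 𝔟 : Ideal R)
    (M : Type) [AddCommGroup M] [Module R M] [Module.Finite R M]
    (h : ∃ n m : ℕ, 0 < n ∧ 0 < m ∧ J ^ n ≤ 𝔟 ^ m) :
    pairDepth I 𝔟 M ≤ pairDepth I J M := by
  obtain ⟨n, m, hn, hm, hJ⟩ := h
  have hsub : tildeW I J ⊆ tildeW I 𝔟 := by
    rintro 𝔞 ⟨k, hk, hI⟩
    refine ⟨k * n, Nat.mul_pos hk hn, ?_⟩
    calc I ^ (k * n) = (I ^ k) ^ n := by rw [pow_mul]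
      _ ≤ (𝔞 ⊔ J) ^ n := Ideal.pow_right_mono hI n
      _ ≤ 𝔞 ⊔ J ^ n := sup_pow_le_aux _ _ n hn
      _ ≤ 𝔞 ⊔ 𝔟 := sup_le_sup_left (hJ.trans (Ideal.pow_le_self hm.ne')) _
  exact biInf_mono hsub
end

section
/- Let R be a commutative noetherian ring, I, J, 𝔟 ideals of R with √I = √𝔟, and M a finitely generated R-module. Then depth(I,J,M) = depth(𝔟,J,M). -/
open CategoryTheory

variable {R : Type} [CommRing R]

lemma tildeW_subset_of_pow_le {I J 𝔟 : Ideal R} {k : ℕ} (hk : 0 < k) (h : 𝔟 ^ k ≤ I) :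
    tildeW I J ⊆ tildeW 𝔟 J := by
  rintro 𝔞 ⟨n, hn, hle⟩
  refine ⟨k * n, Nat.mul_pos hk hn, ?_⟩
  rw [pow_mul]
  exact le_trans (Ideal.pow_right_mono h n) hle

lemma tildeW_eq_of_radical_eq {I 𝔟 : Ideal R} [IsNoetherianRing R]
    (h : I.radical = 𝔟.radical) (J : Ideal R) : tildeW I J = tildeW 𝔟 J := by
  have hfgI : I.radical.FG := isNoetherian_def.mp inferInstance _
  have hfgB : 𝔟.radical.FG := isNoetherian_def.mp inferInstance _
  obtain ⟨n, hn⟩ : ∃ k : ℕ, I ^ k ≤ 𝔟 :=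
    Ideal.exists_pow_le_of_le_radical_of_fg_radical (h ▸ Ideal.le_radical) hfgB
  obtain ⟨m, hm⟩ : ∃ k : ℕ, 𝔟 ^ k ≤ I :=
    Ideal.exists_pow_le_of_le_radical_of_fg_radical (h ▸ Ideal.le_radical) hfgI
  apply Set.Subset.antisymm
  · exact tildeW_subset_of_pow_le (k := m + 1)
      (Nat.succ_pos m) (le_trans (Ideal.pow_le_pow_right (Nat.le_succ m)) hm)
  · exact tildeW_subset_of_pow_le (k := n + 1)
      (Nat.succ_pos n) (le_trans (Ideal.pow_le_pow_right (Nat.le_succ n)) hn)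

/-- If `√I = √𝔟`, then `depth(I,J,M) = depth(𝔟,J,M)`. -/
theorem pairDepth_eq_of_radical_eq_left [IsNoetherianRing R] (I J 𝔟 : Ideal R)
    (h : I.radical = 𝔟.radical)
    (M : Type) [AddCommGroup M] [Module R M] [Module.Finite R M] :
    pairDepth I J M = pairDepth 𝔟 J M := by
  unfold pairDepth
  rw [tildeW_eq_of_radical_eq h J]
end

section
/- Let R be a commutative noetherian ring, I, J, 𝔠 ideals of R with √J = √𝔠, and M a finitely generated R-module. Then depth(I,J,M) = depth(I,𝔠,M). -/
open CategoryTheory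

variable {R : Type} [CommRing R]

lemma tildeW_subset_of_radical_le [IsNoetherianRing R] (I J 𝔠 : Ideal R)
    (h : J.radical ≤ 𝔠.radical) : tildeW I J ⊆ tildeW I 𝔠 := by
  rintro 𝔞 ⟨n, hn, hle⟩
  have hIrad : I ≤ (𝔞 ⊔ 𝔠).radical := by
    have h1 : I ≤ (𝔞 ⊔ J).radical := fun x hx =>
      ⟨n, hle (Ideal.pow_mem_pow hx n)⟩
    refine h1.trans ?_
    rw [Ideal.radical_sup, Ideal.radical_sup (J := 𝔠)]
    exact Ideal.radical_mono (sup_le_sup_left h _)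
  obtain ⟨m, hm⟩ := Ideal.exists_pow_le_of_le_radical_of_fg hIrad
    (IsNoetherian.noetherian I)
  exact ⟨m + 1, Nat.succ_pos m, le_trans (Ideal.pow_le_pow_right (by omega)) hm⟩

/-- If `√J = √𝔠`, then `depth(I,J,M) = depth(I,𝔠,M)`. -/
theorem pairDepth_eq_of_radical_eq_right [IsNoetherianRing R] (I J 𝔠 : Ideal R)
    (h : J.radical = 𝔠.radical)
    (M : Type) [AddCommGroup M] [Module R M] [Module.Finite R M] :
    pairDepth I J M = pairDepth I 𝔠 M := by
  have : tildeW I J = tildeW I 𝔠 :=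
    le_antisymm (tildeW_subset_of_radical_le I J 𝔠 h.le)
      (tildeW_subset_of_radical_le I 𝔠 J h.ge)
  unfold pairDepth
  rw [this]
end

section
/- Let R be a commutative noetherian ring, I, J, 𝔟 ideals of R, and M a finitely generated R-module. Then depth(I, J𝔟, M) = depth(I, J ∩ 𝔟, M). -/
open CategoryTheory

variable {R : Type} [CommRing R]

/-- `depth(I, J𝔟, M) = depth(I, J ∩ 𝔟, M)`. -/
theorem pairDepth_mul_eq_pairDepth_inf [IsNoetherianRing R] (I J 𝔟 : Ideal R)
    (M : Type) [AddCommGroup M] [Module R M] [Module.Finite R M] :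
    pairDepth I (J * 𝔟) M = pairDepth I (J ⊓ 𝔟) M := by
  have hset : tildeW I (J * 𝔟) = tildeW I (J ⊓ 𝔟) := by
    ext 𝔞
    constructor
    · rintro ⟨n, hn, hle⟩
      exact ⟨n, hn, hle.trans (sup_le_sup_left Ideal.mul_le_inf _)⟩
    · rintro ⟨n, hn, hle⟩
      refine ⟨2 * n, by omega, ?_⟩
      have h1 : I ^ (2 * n) = I ^ n * I ^ n := by
        rw [← pow_add]; ring_nf
      have h2 : (𝔞 ⊔ (J ⊓ 𝔟)) * (𝔞 ⊔ (J ⊓ 𝔟)) ≤ 𝔞 ⊔ (J ⊓ 𝔟) * (J ⊓ 𝔟) := by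
        rw [Ideal.sup_mul]
        refine sup_le (le_sup_of_le_left Ideal.mul_le_left) ?_
        rw [Ideal.mul_sup]
        exact sup_le (le_sup_of_le_left Ideal.mul_le_right) le_sup_right
      have h3 : (J ⊓ 𝔟) * (J ⊓ 𝔟) ≤ J * 𝔟 :=
        Ideal.mul_mono inf_le_left inf_le_right
      calc I ^ (2 * n) = I ^ n * I ^ n := h1
        _ ≤ (𝔞 ⊔ (J ⊓ 𝔟)) * (𝔞 ⊔ (J ⊓ 𝔟)) := Ideal.mul_mono hle hle
        _ ≤ 𝔞 ⊔ (J ⊓ 𝔟) * (J ⊓ 𝔟) := h2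
        _ ≤ 𝔞 ⊔ J * 𝔟 := sup_le_sup_left h3 _
  unfold pairDepth
  rw [hset]
end
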